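/- arXiv:0902.4337 — 2 statements merged into one kernel-verified Lean document; each statement's English description precedes it below -/
import Mathlib

section
/- Let r = (α, p) and s = (β, q) be rigid motions of the plane, where (γ, v) acts by x ↦ M_γ x + v with M_γ the rotation by angle 2πγ. Suppose |α - β| ≤ δ and ‖p - q‖ ≤ √2·δ for some δ with 0 ≤ 2πδ ≤ π/2. Then for every x with ‖x‖ ≤ D, we have ‖r(x) - s(x)‖ ≤ (√2 + 2πD)·δ. -/
/-! By the triangle inequality the translations contribute `‖p - q‖`, and the two rotations move
`x` to points whose distance `√(2 - 2 cos θ) ‖x‖`, with `θ = 2π(α - β)`, is at most `|θ| ‖x‖`. -/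

open Real

/-- Rotation of the Euclidean plane by angle `2πα`. -/
noncomputable def rotE (α : ℝ) (x : EuclideanSpace ℝ (Fin 2)) :
    EuclideanSpace ℝ (Fin 2) :=
  (WithLp.equiv 2 (Fin 2 → ℝ)).symm
    ![Real.cos (2 * π * α) * x 0 - Real.sin (2 * π * α) * x 1,
      Real.sin (2 * π * α) * x 0 + Real.cos (2 * π * α) * x 1]

lemma two_sub_two_mul_cos_le_sq (θ : ℝ) : 2 - 2 * cos θ ≤ θ ^ 2 := by
  linarith [one_sub_sq_div_two_le_cos (x := θ)]

lemma norm_rotE_sub_rotE_sq (α β : ℝ) (x : EuclideanSpace ℝ (Fin 2)) :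
    ‖rotE α x - rotE β x‖ ^ 2 = (2 - 2 * cos (2 * π * (α - β))) * ‖x‖ ^ 2 := by
  simp only [EuclideanSpace.real_norm_sq_eq, Fin.sum_univ_two, PiLp.sub_apply, rotE,
    WithLp.equiv_symm_apply, Matrix.cons_val_zero, Matrix.cons_val_one]
  rw [mul_sub, cos_sub]
  linear_combination (x 0 ^ 2 + x 1 ^ 2) *
    (sin_sq_add_cos_sq (2 * π * α) + sin_sq_add_cos_sq (2 * π * β))

lemma norm_rotE_sub_rotE_le (α β : ℝ) (x : EuclideanSpace ℝ (Fin 2)) :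
    ‖rotE α x - rotE β x‖ ≤ 2 * π * |α - β| * ‖x‖ := by
  refine le_of_pow_le_pow_left₀ two_ne_zero (by positivity) ?_
  calc ‖rotE α x - rotE β x‖ ^ 2
      = (2 - 2 * cos (2 * π * (α - β))) * ‖x‖ ^ 2 := norm_rotE_sub_rotE_sq α β x
    _ ≤ (2 * π * (α - β)) ^ 2 * ‖x‖ ^ 2 := by
      gcongr; exact two_sub_two_mul_cos_le_sq _
    _ = (2 * π * |α - β| * ‖x‖) ^ 2 := by simp only [mul_pow, sq_abs]

theorem stmt4_general (α β : ℝ) (p q : EuclideanSpace ℝ (Fin 2)) (δ D : ℝ)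
    (hαβ : |α - β| ≤ δ) (hpq : ‖p - q‖ ≤ Real.sqrt 2 * δ)
    (x : EuclideanSpace ℝ (Fin 2)) (hx : ‖x‖ ≤ D) :
    ‖(rotE α x + p) - (rotE β x + q)‖ ≤ (Real.sqrt 2 + 2 * π * D) * δ := by
  have hδ : 0 ≤ δ := (abs_nonneg _).trans hαβ
  calc ‖(rotE α x + p) - (rotE β x + q)‖
      = ‖(rotE α x - rotE β x) + (p - q)‖ := by rw [add_sub_add_comm]
    _ ≤ ‖rotE α x - rotE β x‖ + ‖p - q‖ := norm_add_le _ _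
    _ ≤ 2 * π * δ * D + Real.sqrt 2 * δ := by
      gcongr
      exact (norm_rotE_sub_rotE_le α β x).trans (by gcongr)
    _ = (Real.sqrt 2 + 2 * π * D) * δ := by ring

/-- If two rigid motions `r = (α, p)` and `s = (β, q)` satisfy `|α - β| ≤ δ` and
`‖p - q‖ ≤ √2·δ` with `0 ≤ 2πδ ≤ π/2`, then their images of any point `x` with
`‖x‖ ≤ D` differ by at most `(√2 + 2πD)·δ`. -/
theorem stmt4 (α β : ℝ) (p q : EuclideanSpace ℝ (Fin 2)) (δ D : ℝ)
    (hD : 0 < D)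
    (hαβ : |α - β| ≤ δ) (hpq : ‖p - q‖ ≤ Real.sqrt 2 * δ)
    (hδ0 : 0 ≤ 2 * π * δ) (hδ1 : 2 * π * δ ≤ π / 2)
    (x : EuclideanSpace ℝ (Fin 2)) (hx : ‖x‖ ≤ D) :
    ‖(rotE α x + p) - (rotE β x + q)‖ ≤ (Real.sqrt 2 + 2 * π * D) * δ :=
  stmt4_general α β p q δ D hαβ hpq x hx
end

section
/- Let P be a probability measure on ℝⁿ with density h that is Lipschitz continuous with constant L in the maximum norm. If r and s lie in a common δ-ball U_δ(t) (maximum norm), then |P(U_δ(r)) - P(U_δ(s))| < 4L·μ_δ·δ, where μ_δ = (2δ)ⁿ. -/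
open MeasureTheory Metric

/-! Translating `U_δ(r)` onto `U_δ(s)` turns the difference of the two probabilities into
`∫_{U_δ(r)} (h x - h (x + (s - r)))`. The integrand is at most `L‖s - r‖ ≤ 2Lδ` in absolute
value, so the difference is at most `2Lδ μ_δ`, which is strictly less than `4Lδ μ_δ`. -/

section Translation

variable {E : Type*} [NormedAddCommGroup E] [MeasurableSpace E]
  {μ : Measure E} {f : E → ℝ} {L : ℝ}

theorem setIntegral_closedBall_add_eq [BorelSpace E] [μ.IsAddRightInvariant] (x c : E) (δ : ℝ) :
    ∫ y in closedBall (x + c) δ, f y ∂μ = ∫ y in closedBall x δ, f (y + c) ∂μ := by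
  have := (measurePreserving_add_right μ c).setIntegral_preimage_emb
    (MeasurableEquiv.addRight c).measurableEmbedding f (closedBall (x + c) δ)
  rwa [preimage_add_right_closedBall, add_sub_cancel_right, eq_comm] at this

theorem abs_setIntegral_sub_comp_add_le (hf : ∀ x y, |f x - f y| ≤ L * ‖x - y‖) {s : Set E}
    (hs : μ s < ⊤) (c : E) :
    |∫ y in s, (f y - f (y + c)) ∂μ| ≤ L * ‖c‖ * μ.real s := by
  rw [← Real.norm_eq_abs]
  refine norm_setIntegral_le_of_norm_le_const hs fun y _ ↦ ?_
  simpa [Real.norm_eq_abs] using hf y (y + c)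

theorem abs_setIntegral_closedBall_sub_le [BorelSpace E] [μ.IsAddRightInvariant]
    (hint : Integrable f μ) (hf : ∀ x y, |f x - f y| ≤ L * ‖x - y‖) (x y : E) {δ : ℝ}
    (hδ : μ (closedBall x δ) < ⊤) :
    |(∫ z in closedBall x δ, f z ∂μ) - ∫ z in closedBall y δ, f z ∂μ| ≤
      L * dist x y * μ.real (closedBall x δ) := by
  have hint_add : Integrable (fun z ↦ f (z + (y - x))) μ := hint.comp_add_right (y - x)
  rw [← add_sub_cancel x y, setIntegral_closedBall_add_eq, add_sub_cancel,
    ← integral_sub hint.integrableOn hint_add.integrableOn, dist_comm, dist_eq_norm]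
  exact abs_setIntegral_sub_comp_add_le hf hδ (y - x)

end Translation

theorem Real.volume_real_pi_closedBall {n : ℕ} (x : Fin n → ℝ) {δ : ℝ} (hδ : 0 ≤ δ) :
    volume.real (closedBall x δ) = (2 * δ) ^ n := by
  rw [measureReal_def, Real.volume_pi_closedBall x hδ, Fintype.card_fin,
    ENNReal.toReal_ofReal (by positivity)]

theorem stmt9_general (n : ℕ) (h : (Fin n → ℝ) → ℝ) (L : ℝ) (hL : 0 < L)
    (hint : Integrable h volume)
    (hLip : ∀ x y, |h x - h y| ≤ L * ‖x - y‖)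
    (t r s : Fin n → ℝ) (δ : ℝ) (hδ : 0 < δ)
    (hr : r ∈ Metric.closedBall t δ) (hs : s ∈ Metric.closedBall t δ) :
    |(∫ x in Metric.closedBall r δ, h x) - ∫ x in Metric.closedBall s δ, h x| <
      4 * L * (2 * δ) ^ n * δ := by
  have hrs : dist r s ≤ 2 * δ := by
    linarith [dist_triangle_right r s t, mem_closedBall.1 hr, mem_closedBall.1 hs]
  have hvol : (0 : ℝ) < (2 * δ) ^ n := by positivity
  calc _ ≤ L * dist r s * volume.real (closedBall r δ) :=
        abs_setIntegral_closedBall_sub_le hint hLip r s (isCompact_closedBall r δ).measure_lt_top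
    _ = L * dist r s * (2 * δ) ^ n := by rw [Real.volume_real_pi_closedBall r hδ.le]
    _ ≤ L * (2 * δ) * (2 * δ) ^ n := by gcongr
    _ < 4 * L * (2 * δ) ^ n * δ := by nlinarith [mul_pos (mul_pos hL hδ) hvol]

/-- If `P` has a density `h` on `ℝⁿ` that is Lipschitz with constant `L`
(maximum norm), and `r, s` lie in a common closed `δ`-ball around `t`, then
`|P(U_δ(r)) - P(U_δ(s))| < 4L·μ_δ·δ` where `μ_δ = (2δ)ⁿ`. -/
theorem stmt9 (n : ℕ) (h : (Fin n → ℝ) → ℝ) (L : ℝ) (hL : 0 < L)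
    (hnonneg : ∀ x, 0 ≤ h x) (hint : Integrable h volume)
    (hone : ∫ x, h x = 1)
    (hLip : ∀ x y, |h x - h y| ≤ L * ‖x - y‖)
    (t r s : Fin n → ℝ) (δ : ℝ) (hδ : 0 < δ)
    (hr : r ∈ Metric.closedBall t δ) (hs : s ∈ Metric.closedBall t δ) :
    |(∫ x in Metric.closedBall r δ, h x) - ∫ x in Metric.closedBall s δ, h x| <
      4 * L * (2 * δ) ^ n * δ :=
  stmt9_general n h L hL hint hLip t r s δ hδ hr hs
end
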